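/- arXiv:2511.21421 — 3 statements merged into one kernel-verified Lean document; each statement's English description precedes it below -/
import Mathlib

section
/- For every integer k ≥ 1, the limit as q → 1⁻ of (1-q)^{2k} · ζ_q(2k) equals ζ(2k), the Riemann zeta value at 2k. -/
open Filter Topology

/-- The q-zeta value ζ_q(2k) = Σ_{m=1}^∞ q^{mk}/(1-q^m)^{2k}. -/
noncomputable def zetaq (q : ℝ) (k : ℕ) : ℝ :=
  ∑' m : ℕ, q ^ ((m + 1) * k) / (1 - q ^ (m + 1)) ^ (2 * k)

lemma sum_range_pos (q : ℝ) (hq0 : 0 < q) (m : ℕ) :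
    0 < ∑ i ∈ Finset.range (m + 1), q ^ i := by
  apply Finset.sum_pos
  · intro i _; positivity
  · exact ⟨0, Finset.mem_range.mpr (Nat.succ_pos m)⟩

/-- For `q ∈ (0,1)`, the rescaled term equals a ratio of nonvanishing continuous pieces. -/
lemma zetaq_term_eq (q : ℝ) (hq0 : 0 < q) (hq1 : q < 1) (k m : ℕ) :
    (1 - q) ^ (2 * k) * (q ^ ((m + 1) * k) / (1 - q ^ (m + 1)) ^ (2 * k)) =
      q ^ ((m + 1) * k) / (∑ i ∈ Finset.range (m + 1), q ^ i) ^ (2 * k) := by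
  have hgs : (1 - q) * ∑ i ∈ Finset.range (m + 1), q ^ i = 1 - q ^ (m + 1) := by
    have := geom_sum_mul q (m + 1)
    nlinarith [this]
  have hne : (1 - q) ≠ 0 := by linarith
  have hSne := (sum_range_pos q hq0 m).ne'
  rw [← hgs, mul_pow]
  field_simp

lemma sum_ge (q : ℝ) (hq0 : 0 < q) (hq1 : q < 1) (m : ℕ) :
    ((m + 1) / 2 + 1 : ℕ) * q ^ ((m + 1) / 2) ≤ ∑ i ∈ Finset.range (m + 1), q ^ i := by
  set j := (m + 1) / 2 with hj
  calc ((j + 1 : ℕ) : ℝ) * q ^ j = ∑ _i ∈ Finset.range (j + 1), q ^ j := by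
        simp [Finset.sum_const, nsmul_eq_mul]
    _ ≤ ∑ i ∈ Finset.range (j + 1), q ^ i := by
        apply Finset.sum_le_sum
        intro i hi
        exact pow_le_pow_of_le_one hq0.le hq1.le (Nat.lt_succ_iff.mp (Finset.mem_range.mp hi))
    _ ≤ ∑ i ∈ Finset.range (m + 1), q ^ i := by
        apply Finset.sum_le_sum_of_subset_of_nonneg
        · exact Finset.range_subset_range.mpr (by omega)
        · intro i _ _; positivity

lemma zetaq_term_bound (q : ℝ) (hq0 : 0 < q) (hq1 : q < 1) (k m : ℕ) :
    q ^ ((m + 1) * k) / (∑ i ∈ Finset.range (m + 1), q ^ i) ^ (2 * k) ≤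
      (4 : ℝ) ^ k / ((m : ℝ) + 1) ^ (2 * k) := by
  set j := (m + 1) / 2 with hj
  have hS := sum_ge q hq0 hq1 m
  have hqjpos : (0:ℝ) < q ^ j := by positivity
  have hQpos : (0:ℝ) < (q ^ j) ^ (2 * k) := by positivity
  have hnum : q ^ ((m + 1) * k) ≤ (q ^ j) ^ (2 * k) := by
    rw [← pow_mul]
    apply pow_le_pow_of_le_one hq0.le hq1.le
    have h2j : 2 * j ≤ m + 1 := by omega
    calc j * (2 * k) = 2 * j * k := by ring
      _ ≤ (m + 1) * k := Nat.mul_le_mul_right k h2j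
  have hden : ((j + 1 : ℕ) : ℝ) ^ (2 * k) * (q ^ j) ^ (2 * k) ≤
      (∑ i ∈ Finset.range (m + 1), q ^ i) ^ (2 * k) := by
    rw [← mul_pow]
    apply pow_le_pow_left₀ (by positivity) hS
  have step1 : q ^ ((m + 1) * k) / (∑ i ∈ Finset.range (m + 1), q ^ i) ^ (2 * k) ≤
      (q ^ j) ^ (2 * k) / (((j + 1 : ℕ) : ℝ) ^ (2 * k) * (q ^ j) ^ (2 * k)) := by
    apply div_le_div₀ hQpos.le hnum (by positivity) hden
  have step2 : (q ^ j) ^ (2 * k) / (((j + 1 : ℕ) : ℝ) ^ (2 * k) * (q ^ j) ^ (2 * k)) =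
      1 / ((j + 1 : ℕ) : ℝ) ^ (2 * k) := by
    rw [mul_comm]
    field_simp
  have step3 : 1 / ((j + 1 : ℕ) : ℝ) ^ (2 * k) ≤ (4 : ℝ) ^ k / ((m : ℝ) + 1) ^ (2 * k) := by
    rw [div_le_div_iff₀ (by positivity) (by positivity), one_mul]
    have hm2j : ((m : ℝ) + 1) ≤ 2 * ((j : ℝ) + 1) := by
      have : (m + 1 : ℕ) ≤ 2 * (j + 1) := by omega
      exact_mod_cast this
    calc ((m : ℝ) + 1) ^ (2 * k) ≤ (2 * ((j : ℝ) + 1)) ^ (2 * k) :=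
          pow_le_pow_left₀ (by positivity) hm2j _
      _ = (4 : ℝ) ^ k * ((j : ℝ) + 1) ^ (2 * k) := by
          rw [mul_pow]
          congr 1
          rw [pow_mul]; norm_num
      _ = (4 : ℝ) ^ k * ((j + 1 : ℕ) : ℝ) ^ (2 * k) := by push_cast; ring
  calc _ ≤ _ := step1
    _ = _ := step2
    _ ≤ _ := step3

theorem zetaq_limit (k : ℕ) (hk : 1 ≤ k) :
    Tendsto (fun q : ℝ => (1 - q) ^ (2 * k) * zetaq q k)
      (nhdsWithin 1 (Set.Ioo 0 1))
      (nhds (∑' m : ℕ, 1 / ((m : ℝ) + 1) ^ (2 * k))) := by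
  have hrw : (fun q : ℝ => (1 - q) ^ (2 * k) * zetaq q k) =
      fun q : ℝ => ∑' m : ℕ, (1 - q) ^ (2 * k) *
        (q ^ ((m + 1) * k) / (1 - q ^ (m + 1)) ^ (2 * k)) := by
    funext q
    rw [zetaq, tsum_mul_left]
  rw [hrw]
  apply tendsto_tsum_of_dominated_convergence
    (bound := fun m : ℕ => (4 : ℝ) ^ k / ((m : ℝ) + 1) ^ (2 * k))
  · -- summability of the bound
    have h1 : Summable (fun n : ℕ => 1 / ((n : ℝ)) ^ (2 * k)) :=
      Real.summable_one_div_nat_pow.mpr (by omega)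
    have h2 : Summable (fun n : ℕ => 1 / (((n : ℝ)) + 1) ^ (2 * k)) := by
      have := (summable_nat_add_iff 1).mpr h1
      refine this.congr fun n => ?_
      push_cast; ring_nf
    simpa [div_eq_mul_inv, one_div] using h2.mul_left ((4 : ℝ) ^ k)
  · -- pointwise limit
    intro m
    have heq : ∀ᶠ q : ℝ in nhdsWithin 1 (Set.Ioo 0 1),
        (1 - q) ^ (2 * k) * (q ^ ((m + 1) * k) / (1 - q ^ (m + 1)) ^ (2 * k)) =
        q ^ ((m + 1) * k) / (∑ i ∈ Finset.range (m + 1), q ^ i) ^ (2 * k) := by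
      filter_upwards [self_mem_nhdsWithin] with q hq
      exact zetaq_term_eq q hq.1 hq.2 k m
    refine Tendsto.congr' (Filter.EventuallyEq.symm heq) ?_
    have hcont : ContinuousAt (fun q : ℝ =>
        q ^ ((m + 1) * k) / (∑ i ∈ Finset.range (m + 1), q ^ i) ^ (2 * k)) 1 := by
      apply ContinuousAt.div
      · fun_prop
      · fun_prop
      · have := sum_range_pos (1:ℝ) one_pos m
        positivity
    have h2 : Tendsto (fun q : ℝ =>
        q ^ ((m + 1) * k) / (∑ i ∈ Finset.range (m + 1), q ^ i) ^ (2 * k))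
        (nhdsWithin 1 (Set.Ioo 0 1)) (nhds
        ((1:ℝ) ^ ((m + 1) * k) / (∑ i ∈ Finset.range (m + 1), (1:ℝ) ^ i) ^ (2 * k))) :=
      hcont.tendsto.mono_left nhdsWithin_le_nhds
    convert h2 using 2
    simp
  · -- the bound
    filter_upwards [self_mem_nhdsWithin] with q hq m
    rw [zetaq_term_eq q hq.1 hq.2 k m, Real.norm_of_nonneg (div_nonneg (pow_nonneg hq.1.le _) (pow_nonneg (sum_range_pos q hq.1 m).le _))]
    exact zetaq_term_bound q hq.1 hq.2 k m
end

section
/- For 0 < q < 1, a positive integer M, and complex z with 0 < |z-1| sufficiently small, one has the identity (1/(2 y^M(z) x'(z))) = (z^3/(z^2-1)^2) · exp(Σ_{m=2}^∞ Σ_{k=1}^{⌊m/2⌋} a_{mk} ζ_q^M(2k) (z-1)^m), where x(z) = z + z^{-1}, y^M(z) = (1/2)(z - z^{-1}) Π_{k=1}^M (1-q^k z^2)(1-q^k z^{-2})/(1-q^k)^2, ζ_q^M(2k) = Σ_{m=1}^M q^{mk}/(1-q^m)^{2k}, and a_{mk} is the coefficient of t^{m-2k} in (1/k)(2 - t + t^2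 - t^3 + ···)^{2k}. -/
/-- The truncated q-zeta value ζ_q^M(2k) = Σ_{m=1}^M q^{mk}/(1-q^m)^{2k}. -/
noncomputable def zetaqM (q : ℝ) (M k : ℕ) : ℝ :=
  ∑ m ∈ Finset.range M, q ^ ((m + 1) * k) / (1 - q ^ (m + 1)) ^ (2 * k)

/-- The power series 2 - t + t² - t³ + ··· ∈ ℚ⟦t⟧. -/
noncomputable def gSeries : PowerSeries ℚ :=
  PowerSeries.mk fun n => if n = 0 then 2 else (-1) ^ n

/-- `aCoeff m k` is the coefficient of t^{m-2k} in (1/k)·(2 - t + t² - ···)^{2k}. -/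
noncomputable def aCoeff (m k : ℕ) : ℚ :=
  (PowerSeries.coeff (m - 2 * k)) (gSeries ^ (2 * k)) / k

/-- Okuyama's truncated y-function. -/
noncomputable def yM (q : ℝ) (M : ℕ) (z : ℂ) : ℂ :=
  (1 / 2) * (z - z⁻¹) * ∏ k ∈ Finset.range M,
    (1 - (q : ℂ) ^ (k + 1) * z ^ 2) * (1 - (q : ℂ) ^ (k + 1) * z⁻¹ ^ 2)
      / (1 - (q : ℂ) ^ (k + 1)) ^ 2

namespace KAux

noncomputable def cg (j n : ℕ) : ℂ := ((PowerSeries.coeff n) (gSeries ^ j) : ℚ)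

lemma cg_zero (n : ℕ) : cg 0 n = if n = 0 then 1 else 0 := by
  simp [cg, PowerSeries.coeff_one]
  split <;> simp

lemma cg_one (n : ℕ) : cg 1 n = if n = 0 then 2 else (-1) ^ n := by
  simp [cg, gSeries, PowerSeries.coeff_mk]
  split <;> push_cast <;> simp

lemma norm_cg_one_le (n : ℕ) : ‖cg 1 n‖ ≤ 2 := by
  rw [cg_one]; split
  · simp
  · rw [norm_pow]; simp

lemma cg_succ (j n : ℕ) : cg (j + 1) n
    = ∑ kl ∈ Finset.HasAntidiagonal.antidiagonal n, cg j kl.1 * cg 1 kl.2 := by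
  have h : gSeries ^ (j + 1) = gSeries ^ j * gSeries ^ 1 := by ring
  simp only [cg, h, PowerSeries.coeff_mul]
  push_cast
  rfl

lemma cg_one_hasSum {t : ℂ} (ht : ‖t‖ < 1) :
    HasSum (fun n => cg 1 n * t ^ n) ((2 + t) / (1 + t)) := by
  have h1 : ‖-t‖ < 1 := by simpa
  have hgeo : HasSum (fun n : ℕ => (-t) ^ n) (1 - -t)⁻¹ := hasSum_geometric_of_norm_lt_one h1
  have hne : (1 : ℂ) + t ≠ 0 := by
    intro h0
    have hx : t = -1 := by linear_combination h0
    rw [hx] at ht; simp at ht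
  have hδ : HasSum (fun n : ℕ => if n = 0 then (1:ℂ) else 0) 1 := by
    simpa using hasSum_ite_eq (0 : ℕ) (1 : ℂ)
  have hadd := hgeo.add hδ
  have heq : (fun n : ℕ => (-t) ^ n + if n = 0 then (1:ℂ) else 0) = fun n => cg 1 n * t ^ n := by
    funext n
    rw [cg_one]
    rcases Nat.eq_zero_or_pos n with rfl | hn
    · norm_num
    · rw [if_neg hn.ne', if_neg hn.ne', neg_pow]; ring
  rw [heq] at hadd
  convert hadd using 1
  rw [sub_neg_eq_add]
  field_simp
  ring


lemma cg_one_summable_norm {t : ℂ} (ht : ‖t‖ < 1) :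
    Summable (fun n => ‖cg 1 n * t ^ n‖)
    ∧ (∑' n, ‖cg 1 n * t ^ n‖) ≤ 2 / (1 - ‖t‖) := by
  have hgeo : Summable (fun n : ℕ => 2 * ‖t‖ ^ n) :=
    (summable_geometric_of_lt_one (norm_nonneg t) ht).mul_left 2
  have hle : ∀ n, ‖cg 1 n * t ^ n‖ ≤ 2 * ‖t‖ ^ n := by
    intro n
    rw [norm_mul, norm_pow]
    exact mul_le_mul_of_nonneg_right (norm_cg_one_le n) (by positivity)
  have hs : Summable (fun n => ‖cg 1 n * t ^ n‖) :=
    Summable.of_nonneg_of_le (fun n => norm_nonneg _) hle hgeo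
  refine ⟨hs, ?_⟩
  calc ∑' n, ‖cg 1 n * t ^ n‖ ≤ ∑' n, 2 * ‖t‖ ^ n := Summable.tsum_le_tsum hle hs hgeo
    _ = 2 * (1 - ‖t‖)⁻¹ := by
        rw [tsum_mul_left, tsum_geometric_of_lt_one (norm_nonneg t) ht]
    _ = 2 / (1 - ‖t‖) := by rw [div_eq_mul_inv]

lemma cg_pow (j : ℕ) {t : ℂ} (ht : ‖t‖ < 1) :
    Summable (fun n => ‖cg j n * t ^ n‖) ∧
    (∑' n, ‖cg j n * t ^ n‖) ≤ (2 / (1 - ‖t‖)) ^ j ∧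
    (∑' n, cg j n * t ^ n) = ((2 + t) / (1 + t)) ^ j := by
  induction j with
  | zero =>
    have h0 : ∀ n ∉ ({0} : Finset ℕ), cg 0 n * t ^ n = 0 := by
      intro n hn
      rw [cg_zero, if_neg (by simpa using hn), zero_mul]
    have h0' : ∀ n ∉ ({0} : Finset ℕ), ‖cg 0 n * t ^ n‖ = 0 := by
      intro n hn; rw [h0 n hn, norm_zero]
    refine ⟨summable_of_ne_finset_zero h0', ?_, ?_⟩
    · rw [tsum_eq_sum h0']
      simp [cg_zero]
    · rw [tsum_eq_sum h0]
      simp [cg_zero]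
  | succ j ih =>
    obtain ⟨hjs, hjle, hjval⟩ := ih
    obtain ⟨h1s, h1le⟩ := cg_one_summable_norm ht
    set f : ℕ → ℂ := fun n => cg j n * t ^ n with hf
    set g : ℕ → ℂ := fun n => cg 1 n * t ^ n with hg
    have key : ∀ n, cg (j + 1) n * t ^ n
        = ∑ kl ∈ Finset.HasAntidiagonal.antidiagonal n, f kl.1 * g kl.2 := by
      intro n
      rw [cg_succ, Finset.sum_mul]
      refine Finset.sum_congr rfl fun kl hkl => ?_
      rw [Finset.HasAntidiagonal.mem_antidiagonal] at hkl
      rw [hf, hg]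
      simp only
      rw [← hkl, pow_add]
      ring
    have hsum : Summable (fun n => ‖cg (j+1) n * t ^ n‖) := by
      have := summable_norm_sum_mul_antidiagonal_of_summable_norm hjs h1s
      refine this.congr fun n => ?_
      rw [← key]
    refine ⟨hsum, ?_, ?_⟩
    · -- norm bound via real Cauchy product
      have hF : Summable (fun n => ‖(‖f n‖)‖) := by simpa only [norm_norm] using hjs
      have hG : Summable (fun n => ‖(‖g n‖)‖) := by simpa only [norm_norm] using h1s
      have hcauchy := tsum_mul_tsum_eq_tsum_sum_antidiagonal_of_summable_norm hF hG
      have hmaj : Summable (fun n => ∑ kl ∈ Finset.HasAntidiagonal.antidiagonal n, ‖f kl.1‖ * ‖g kl.2‖) := by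
        have := summable_norm_sum_mul_antidiagonal_of_summable_norm hF hG
        refine this.congr fun n => ?_
        rw [Real.norm_of_nonneg]
        positivity
      have hterm : ∀ n, ‖cg (j+1) n * t ^ n‖
          ≤ ∑ kl ∈ Finset.HasAntidiagonal.antidiagonal n, ‖f kl.1‖ * ‖g kl.2‖ := by
        intro n
        rw [key n]
        refine (norm_sum_le _ _).trans ?_
        refine Finset.sum_le_sum fun kl _ => ?_
        rw [norm_mul]
      calc ∑' n, ‖cg (j+1) n * t ^ n‖
          ≤ ∑' n, ∑ kl ∈ Finset.HasAntidiagonal.antidiagonal n, ‖f kl.1‖ * ‖g kl.2‖ :=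
            Summable.tsum_le_tsum hterm hsum hmaj
        _ = (∑' n, ‖f n‖) * (∑' n, ‖g n‖) := hcauchy.symm
        _ ≤ (2 / (1 - ‖t‖)) ^ j * (2 / (1 - ‖t‖)) := by
            have h2 : (0:ℝ) < 1 - ‖t‖ := by linarith
            refine mul_le_mul hjle h1le (tsum_nonneg fun n => norm_nonneg _) (by positivity)
        _ = (2 / (1 - ‖t‖)) ^ (j + 1) := by rw [pow_succ]
    · have hcauchy := tsum_mul_tsum_eq_tsum_sum_antidiagonal_of_summable_norm hjs h1s
      have : (∑' n, cg (j+1) n * t ^ n)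
          = ∑' n, ∑ kl ∈ Finset.HasAntidiagonal.antidiagonal n, f kl.1 * g kl.2 :=
        tsum_congr fun n => key n
      rw [this, ← hcauchy, hjval, (cg_one_hasSum ht).tsum_eq, pow_succ]


lemma tsum_rearrange (M : ℕ) (c : ℕ → ℝ) (hc : ∀ j, 0 ≤ c j)
    (Z : ℕ → ℝ) (hZ : ∀ k, Z k = ∑ j ∈ Finset.range M, c j ^ k)
    {t : ℂ} (ht2 : ‖t‖ ≤ 1 / 2)
    (hsmall : (∑ j ∈ Finset.range M, c j) * (5 * ‖t‖) ^ 2 < 1) :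
    ((∑' m : ℕ, ∑ k ∈ Finset.Icc 1 ((m + 2) / 2),
        (aCoeff (m + 2) k : ℂ) * (Z k : ℂ) * t ^ (m + 2))
      = ∑ j ∈ Finset.range M,
          -Complex.log (1 - (c j : ℂ) * (t * (2 + t) / (1 + t)) ^ 2))
    ∧ ∀ j ∈ Finset.range M, ‖(c j : ℂ) * (t * (2 + t) / (1 + t)) ^ 2‖ < 1 := by
  set r : ℝ := ‖t‖ with hr
  have hr0 : 0 ≤ r := norm_nonneg t
  have ht1 : r < 1 := by linarith
  set C : ℝ := ∑ j ∈ Finset.range M, c j with hCdef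
  have hC0 : 0 ≤ C := Finset.sum_nonneg fun j _ => hc j
  have hcC : ∀ j ∈ Finset.range M, c j ≤ C :=
    fun j hj => Finset.single_le_sum (fun i _ => hc i) hj
  set w : ℂ := t * (2 + t) / (1 + t) with hwdef
  -- bound on ‖w‖
  have h1t : (1 : ℝ) / 2 ≤ ‖1 + t‖ := by
    have := norm_sub_norm_le (1 : ℂ) (-t)
    rw [sub_neg_eq_add] at this
    simp only [norm_one, norm_neg] at this
    linarith
  have h2t : ‖2 + t‖ ≤ 5 / 2 := by
    calc ‖(2 : ℂ) + t‖ ≤ ‖(2 : ℂ)‖ + ‖t‖ := norm_add_le _ _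
      _ ≤ 5 / 2 := by
          rw [show ‖(2:ℂ)‖ = 2 by simp]
          linarith
  have hwnorm : ‖w‖ ≤ 5 * r := by
    calc ‖w‖ = ‖t‖ * ‖2 + t‖ / ‖1 + t‖ := by rw [hwdef, norm_div, norm_mul]
      _ ≤ r * (5 / 2) / (1 / 2) :=
          div_le_div₀ (by positivity)
            (mul_le_mul_of_nonneg_left h2t hr0) (by norm_num) h1t
      _ = 5 * r := by ring
  have hx : ∀ j ∈ Finset.range M, ‖(c j : ℂ) * w ^ 2‖ < 1 := by
    intro j hj
    have h1 : ‖w‖ ^ 2 ≤ (5 * r) ^ 2 := pow_le_pow_left₀ (norm_nonneg w) hwnorm 2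
    have : ‖(c j : ℂ) * w ^ 2‖ = c j * ‖w‖ ^ 2 := by
      rw [norm_mul, norm_pow, Complex.norm_real, Real.norm_of_nonneg (hc j)]
    rw [this]
    calc c j * ‖w‖ ^ 2 ≤ C * (5 * r) ^ 2 :=
          mul_le_mul (hcC j hj) h1 (by positivity) hC0
      _ < 1 := hsmall
  refine ⟨?_, hx⟩
  -- bounds on Z
  have hZ0 : ∀ k, 0 ≤ Z k := by
    intro k; rw [hZ]; exact Finset.sum_nonneg fun j _ => pow_nonneg (hc j) k
  have hZle : ∀ k, Z (k + 1) ≤ C ^ (k + 1) := by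
    intro k
    rw [hZ]
    calc ∑ j ∈ Finset.range M, c j ^ (k + 1)
        ≤ ∑ j ∈ Finset.range M, c j * C ^ k := by
          refine Finset.sum_le_sum fun j hj => ?_
          rw [pow_succ']
          exact mul_le_mul_of_nonneg_left
            (pow_le_pow_left₀ (hc j) (hcC j hj) k) (hc j)
      _ = C ^ (k + 1) := by rw [← Finset.sum_mul, ← hCdef, pow_succ']
  -- the double-series family
  set A : ℝ := 2 / (1 - r) with hAdef
  have hA0 : 0 ≤ A := by
    have : (0:ℝ) < 1 - r := by linarith
    positivity
  have hrA5 : r * A ≤ 5 * r := by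
    have h4 : A ≤ 4 := by
      rw [hAdef, div_le_iff₀ (by linarith)]
      linarith
    nlinarith
  set ρ : ℝ := C * (5 * r) ^ 2 with hρdef
  have hρ0 : 0 ≤ ρ := by positivity
  have hρ1 : ρ < 1 := hsmall
  set F : ℕ × ℕ → ℂ := fun p =>
    ((Z (p.1 + 1) / (p.1 + 1) : ℝ) : ℂ) * cg (2 * (p.1 + 1)) p.2
      * t ^ (p.2 + 2 * (p.1 + 1)) with hFdef
  have hconst0 : ∀ k : ℕ, 0 ≤ Z (k + 1) / ((k : ℝ) + 1) := by
    intro k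
    exact div_nonneg (hZ0 _) (by positivity)
  have hFnorm : ∀ p : ℕ × ℕ, ‖F p‖
      = (Z (p.1 + 1) / (p.1 + 1) * r ^ (2 * (p.1 + 1)))
        * ‖cg (2 * (p.1 + 1)) p.2 * t ^ p.2‖ := by
    intro p
    rw [hFdef]
    simp only
    rw [norm_mul, norm_mul, norm_pow, Complex.norm_real,
      Real.norm_of_nonneg (by push_cast; exact hconst0 p.1), norm_mul, norm_pow, pow_add]
    ring
  have hinner : ∀ k, Summable fun n => ‖F (k, n)‖ := by
    intro k
    refine Summable.congr (((cg_pow (2 * (k + 1)) ht1).1).mul_left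
      (Z (k + 1) / (k + 1) * r ^ (2 * (k + 1)))) fun n => (hFnorm (k, n)).symm
  have hinnerval : ∀ k, (∑' n, ‖F (k, n)‖) ≤ ρ ^ (k + 1) := by
    intro k
    have heq : (∑' n, ‖F (k, n)‖)
        = (Z (k + 1) / (k + 1) * r ^ (2 * (k + 1)))
          * ∑' n, ‖cg (2 * (k + 1)) n * t ^ n‖ := by
      rw [← tsum_mul_left]
      exact tsum_congr fun n => hFnorm (k, n)
    rw [heq]
    have hb := (cg_pow (2 * (k + 1)) ht1).2.1
    calc (Z (k + 1) / (k + 1) * r ^ (2 * (k + 1)))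
          * (∑' n, ‖cg (2 * (k + 1)) n * t ^ n‖)
        ≤ (Z (k + 1) / (k + 1) * r ^ (2 * (k + 1))) * A ^ (2 * (k + 1)) := by
          refine mul_le_mul_of_nonneg_left hb (mul_nonneg (hconst0 k) (by positivity))
      _ = Z (k + 1) / (k + 1) * ((r * A) ^ 2) ^ (k + 1) := by
          rw [mul_assoc, ← mul_pow, ← pow_mul]
      _ ≤ C ^ (k + 1) * ((5 * r) ^ 2) ^ (k + 1) := by
          refine mul_le_mul ?_ ?_ (by positivity) (by positivity)
          · exact le_trans (div_le_self (hZ0 _) (by push_cast; linarith [Nat.cast_nonneg (α := ℝ) k])) (hZle k)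
          · exact pow_le_pow_left₀ (by positivity)
              (pow_le_pow_left₀ (by positivity) hrA5 2) (k + 1)
      _ = ρ ^ (k + 1) := by rw [hρdef]; ring
  have hFs : Summable fun p => ‖F p‖ := by
    refine (summable_prod_of_nonneg (fun p => norm_nonneg _)).mpr ⟨hinner, ?_⟩
    refine Summable.of_nonneg_of_le (fun k => tsum_nonneg fun n => norm_nonneg _)
      hinnerval ?_
    refine Summable.congr ((summable_geometric_of_lt_one hρ0 hρ1).mul_left ρ) fun k => ?_
    rw [← pow_succ']
  have hFsum : Summable F := hFs.of_norm
  -- value of inner sums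
  have hG : t * ((2 + t) / (1 + t)) = w := by rw [hwdef, mul_div_assoc]
  have hstep2 : ∀ k : ℕ, (∑' n, F (k, n))
      = ((Z (k + 1) / (k + 1) : ℝ) : ℂ) * w ^ (2 * (k + 1)) := by
    intro k
    have h1 : ∀ n : ℕ, F (k, n)
        = (((Z (k + 1) / (k + 1) : ℝ) : ℂ) * t ^ (2 * (k + 1)))
          * (cg (2 * (k + 1)) n * t ^ n) := by
      intro n
      rw [hFdef]
      simp only
      rw [pow_add]
      ring
    calc (∑' n, F (k, n))
        = (((Z (k + 1) / (k + 1) : ℝ) : ℂ) * t ^ (2 * (k + 1)))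
          * ∑' n, cg (2 * (k + 1)) n * t ^ n := by
          rw [← tsum_mul_left]; exact tsum_congr h1
      _ = ((Z (k + 1) / (k + 1) : ℝ) : ℂ) * w ^ (2 * (k + 1)) := by
          rw [(cg_pow (2 * (k + 1)) ht1).2.2, mul_assoc, ← mul_pow, hG]
  -- expand Z into finite sum
  have hstep3 : ∀ k : ℕ, ((Z (k + 1) / (k + 1) : ℝ) : ℂ) * w ^ (2 * (k + 1))
      = ∑ j ∈ Finset.range M, ((c j : ℂ) * w ^ 2) ^ (k + 1) / ((k : ℂ) + 1) := by
    intro k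
    rw [hZ]
    push_cast
    rw [Finset.sum_div, Finset.sum_mul]
    refine Finset.sum_congr rfl fun j _ => ?_
    rw [mul_pow, pow_mul]
    ring
  -- the log series
  have hlog : ∀ j ∈ Finset.range M,
      HasSum (fun k : ℕ => ((c j : ℂ) * w ^ 2) ^ (k + 1) / ((k : ℂ) + 1))
        (-Complex.log (1 - (c j : ℂ) * w ^ 2)) := by
    intro j hj
    have h := Complex.hasSum_taylorSeries_neg_log (hx j hj)
    have h2 := (hasSum_nat_add_iff
      (f := fun n : ℕ => ((c j : ℂ) * w ^ 2) ^ n / n) 1).mpr (by simpa using h)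
    refine h2.congr_fun fun k => ?_
    push_cast
    ring_nf
  -- assembling the k-side
  have hkside : (∑' p : ℕ × ℕ, F p)
      = ∑ j ∈ Finset.range M, -Complex.log (1 - (c j : ℂ) * w ^ 2) := by
    rw [Summable.tsum_prod hFsum]
    have : ∀ k : ℕ, (∑' n, F (k, n))
        = ∑ j ∈ Finset.range M, ((c j : ℂ) * w ^ 2) ^ (k + 1) / ((k : ℂ) + 1) :=
      fun k => (hstep2 k).trans (hstep3 k)
    rw [tsum_congr this, Summable.tsum_finsetSum fun j hj => (hlog j hj).summable]
    exact Finset.sum_congr rfl fun j hj => (hlog j hj).tsum_eq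
  -- reindexing: H on (m, k)
  set H : ℕ × ℕ → ℂ := fun p =>
    if 1 ≤ p.2 ∧ p.2 ≤ (p.1 + 2) / 2 then
      (aCoeff (p.1 + 2) p.2 : ℂ) * ((Z p.2 : ℝ) : ℂ) * t ^ (p.1 + 2)
    else 0 with hHdef
  set i : ℕ × ℕ → ℕ × ℕ := fun p => (p.2 + 2 * p.1, p.1 + 1) with hidef
  have hinj : Function.Injective i := by
    intro p q h
    rw [hidef, Prod.mk.injEq] at h
    obtain ⟨h1, h2⟩ := h
    obtain ⟨a, b⟩ := p; obtain ⟨a', b'⟩ := q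
    simp only at h1 h2
    have : a = a' := by omega
    subst this
    have : b = b' := by omega
    subst this
    rfl
  have hHF : ∀ p : ℕ × ℕ, H (i p) = F p := by
    intro p
    rw [hHdef, hidef]
    simp only
    rw [if_pos (by constructor <;> omega)]
    have harith : p.2 + 2 * p.1 + 2 - 2 * (p.1 + 1) = p.2 := by omega
    rw [aCoeff, harith]
    have hexp : p.2 + 2 * p.1 + 2 = p.2 + 2 * (p.1 + 1) := by omega
    rw [hexp, hFdef]
    simp only [cg]
    push_cast
    ring
  have hH0 : ∀ x ∉ Set.range i, H x = 0 := by
    intro x hxr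
    rw [hHdef]
    simp only
    by_cases h : 1 ≤ x.2 ∧ x.2 ≤ (x.1 + 2) / 2
    · exfalso
      refine hxr ⟨(x.2 - 1, x.1 - 2 * (x.2 - 1)), ?_⟩
      rw [hidef]
      obtain ⟨a, b⟩ := x
      simp only [Prod.mk.injEq]
      obtain ⟨h1, h2⟩ := h
      simp only at h1 h2
      constructor <;> omega
    · rw [if_neg h]
  have hHcomp : Summable (H ∘ i) := hFsum.congr fun p => (hHF p).symm
  have hHsummable : Summable H := (hinj.summable_iff hH0).mp hHcomp
  have hsupp : Function.support H ⊆ Set.range i := by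
    intro x hxs
    by_contra hr
    exact hxs (hH0 x hr)
  have htsum_HF : (∑' x, H x) = ∑' p, F p := by
    rw [← hinj.tsum_eq hsupp]
    exact tsum_congr fun p => hHF p
  -- finally: target LHS = ∑' H
  have hLHS : (∑' m : ℕ, ∑ k ∈ Finset.Icc 1 ((m + 2) / 2),
      (aCoeff (m + 2) k : ℂ) * (Z k : ℂ) * t ^ (m + 2)) = ∑' x, H x := by
    rw [Summable.tsum_prod' hHsummable hHsummable.prod_factor]
    refine tsum_congr fun m => ?_
    rw [tsum_eq_sum (s := Finset.Icc 1 ((m + 2) / 2)) ?_]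
    · refine Finset.sum_congr rfl fun k hk => ?_
      rw [Finset.mem_Icc] at hk
      rw [hHdef]
      simp only
      rw [if_pos hk]
    · intro k hk
      rw [Finset.mem_Icc] at hk
      rw [hHdef]
      simp only
      rw [if_neg hk]
  rw [hLHS, htsum_HF, hkside]

end KAux

open KAux in
theorem kernel_expansion (q : ℝ) (hq0 : 0 < q) (hq1 : q < 1) (M : ℕ) (hM : 1 ≤ M) :
    ∃ ε > 0, ∀ z : ℂ, 0 < ‖z - 1‖ → ‖z - 1‖ < ε →
      1 / (2 * yM q M z * (1 - z⁻¹ ^ 2))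
        = z ^ 3 / (z ^ 2 - 1) ^ 2 *
          Complex.exp (∑' m : ℕ, ∑ k ∈ Finset.Icc 1 ((m + 2) / 2),
            (aCoeff (m + 2) k : ℂ) * (zetaqM q M k : ℂ) * (z - 1) ^ (m + 2)) := by
  set c : ℕ → ℝ := fun j => q ^ (j + 1) / (1 - q ^ (j + 1)) ^ 2 with hcdef
  have hqj : ∀ j : ℕ, 0 < 1 - q ^ (j + 1) := by
    intro j
    have : q ^ (j + 1) < 1 := pow_lt_one₀ hq0.le hq1 (Nat.succ_ne_zero j)
    linarith
  have hc : ∀ j, 0 ≤ c j := by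
    intro j
    have := hqj j
    positivity
  have hZ : ∀ k, zetaqM q M k = ∑ j ∈ Finset.range M, c j ^ k := by
    intro k
    rw [zetaqM]
    refine Finset.sum_congr rfl fun j _ => ?_
    rw [hcdef]
    rw [div_pow, ← pow_mul, ← pow_mul]
  set C : ℝ := ∑ j ∈ Finset.range M, c j with hCdef
  have hC0 : 0 ≤ C := Finset.sum_nonneg fun j _ => hc j
  set ε : ℝ := min (1 / 2) (1 / (6 * (C + 1))) with hεdef
  have hε0 : 0 < ε := by
    refine lt_min (by norm_num) (by positivity)
  refine ⟨ε, hε0, ?_⟩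
  intro z hz0 hzε
  set t : ℂ := z - 1 with htdef
  have hzt : z = 1 + t := by rw [htdef]; ring
  have ht2 : ‖t‖ ≤ 1 / 2 := le_of_lt (lt_of_lt_of_le hzε (min_le_left _ _))
  have htC : ‖t‖ < 1 / (6 * (C + 1)) := lt_of_lt_of_le hzε (min_le_right _ _)
  have hsmall : C * (5 * ‖t‖) ^ 2 < 1 := by
    have h1 : ‖t‖ ^ 2 < (1 / (6 * (C + 1))) ^ 2 := by
      refine pow_lt_pow_left₀ htC (norm_nonneg t) (by norm_num)
    have h2 : C * (5 * ‖t‖) ^ 2 = 25 * C * ‖t‖ ^ 2 := by ring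
    rw [h2]
    have h3 : 25 * C * ‖t‖ ^ 2 ≤ 25 * C * (1 / (6 * (C + 1))) ^ 2 := by
      nlinarith [norm_nonneg t, sq_nonneg (‖t‖ + 1 / (6 * (C + 1)))]
    have h4 : 25 * C * (1 / (6 * (C + 1))) ^ 2 < 1 := by
      rw [show (1 / (6 * (C + 1))) ^ 2 = 1 / (6 * (C + 1)) ^ 2 by
        rw [div_pow, one_pow], mul_one_div, div_lt_one (by positivity)]
      nlinarith
    linarith
  obtain ⟨hsum, hxlt⟩ := tsum_rearrange M c hc (zetaqM q M) hZ ht2 hsmall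
  set w : ℂ := t * (2 + t) / (1 + t) with hwdef
  -- basic nonvanishing
  have htne : t ≠ 0 := by
    intro h; rw [h] at hz0; simp at hz0
  have hz_ne : z ≠ 0 := by
    intro h
    rw [h] at htdef
    rw [htdef] at ht2
    norm_num at ht2
  have hz1_ne : (1 : ℂ) + t ≠ 0 := by
    intro h
    have : t = -1 := by linear_combination h
    rw [this] at ht2
    norm_num at ht2
  have hzsq : z ^ 2 - 1 ≠ 0 := by
    rw [hzt]
    intro h
    have h2 : t * (2 + t) = 0 := by linear_combination h
    rcases mul_eq_zero.mp h2 with h3 | h3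
    · exact htne h3
    · have : t = -2 := by linear_combination h3
      rw [this] at ht2
      norm_num at ht2
  have hGne : ∀ j ∈ Finset.range M, 1 - (c j : ℂ) * w ^ 2 ≠ 0 := by
    intro j hj h
    have : (c j : ℂ) * w ^ 2 = 1 := by linear_combination -h
    have h2 := hxlt j hj
    rw [hwdef] at h2
    rw [← hwdef, this] at h2
    simp at h2
  -- w = z - z⁻¹
  have hwz : w = z - z⁻¹ := by
    rw [hwdef, hzt]
    field_simp
    ring
  -- per-factor identity
  have hfac : ∀ j ∈ Finset.range M,
      (1 - (q : ℂ) ^ (j + 1) * z ^ 2) * (1 - (q : ℂ) ^ (j + 1) * z⁻¹ ^ 2)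
        / (1 - (q : ℂ) ^ (j + 1)) ^ 2 = 1 - (c j : ℂ) * w ^ 2 := by
    intro j hj
    have hQ1 : (1 : ℂ) - (q : ℂ) ^ (j + 1) ≠ 0 := by
      have := hqj j
      intro h
      have h2 : ((1 - q ^ (j + 1) : ℝ) : ℂ) = 0 := by push_cast; linear_combination h
      rw [Complex.ofReal_eq_zero] at h2
      linarith
    have hcj : (c j : ℂ) = (q : ℂ) ^ (j + 1) / (1 - (q : ℂ) ^ (j + 1)) ^ 2 := by
      rw [hcdef]
      push_cast
      ring
    rw [hcj, hwz]
    field_simp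
    ring
  -- rewrite RHS exp into product
  rw [hsum, Complex.exp_sum]
  have hexp : ∀ j ∈ Finset.range M,
      Complex.exp (-Complex.log (1 - (c j : ℂ) * w ^ 2))
        = (1 - (c j : ℂ) * w ^ 2)⁻¹ := by
    intro j hj
    rw [Complex.exp_neg, Complex.exp_log (hGne j hj)]
  rw [Finset.prod_congr rfl hexp, Finset.prod_inv_distrib]
  rw [yM, Finset.prod_congr rfl hfac]
  have hfactor : 2 * ((1 / 2 : ℂ) * (z - z⁻¹)
        * ∏ j ∈ Finset.range M, (1 - (c j : ℂ) * w ^ 2)) * (1 - z⁻¹ ^ 2)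
      = (z ^ 2 - 1) ^ 2 / z ^ 3
        * ∏ j ∈ Finset.range M, (1 - (c j : ℂ) * w ^ 2) := by
    generalize (∏ j ∈ Finset.range M, (1 - (c j : ℂ) * w ^ 2)) = P
    field_simp
  rw [hfactor, one_div, mul_inv, inv_div]
end

section
/- Let P(x,y) = x^{2i-1} y^{2j-1}/((2i-1)!(2j-1)!) for positive integers i, j, and let b_0, b_1, b_2, ... be real numbers such that ∫_0^∞ x^{2k-1}/(2k-1)! · H(x, L) dx = Σ_{n=0}^k b_n L^{2k-2n}/(2k-2n)! for all positive integers k and all L ≥ 0, for a given kernel H. Then ∫_0^∞ ∫_0^∞ P(x,y) H(x+y, L) dx dy = Σ_{n=0}^{i+j} b_{i+j-n} L^{2n}/(2n)!. -/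
open MeasureTheory

lemma beta_nat (a b : ℕ) {u : ℝ} (hu : 0 < u) :
    ∫ v in (0:ℝ)..u, v ^ a * (u - v) ^ b
      = u ^ (a + b + 1) * (a.factorial * b.factorial) / (a + b + 1).factorial := by
  have hne : ((a + b + 1).factorial : ℂ) ≠ 0 :=
    Nat.cast_ne_zero.mpr (Nat.factorial_ne_zero _)
  have hbeta : Complex.betaIntegral ((a : ℂ) + 1) ((b : ℂ) + 1)
      = (a.factorial : ℂ) * (b.factorial : ℂ) / ((a + b + 1).factorial : ℂ) := by
    have hs : 0 < ((a : ℂ) + 1).re := by simp; positivity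
    have ht : 0 < ((b : ℂ) + 1).re := by simp; positivity
    have h := Complex.Gamma_mul_Gamma_eq_betaIntegral hs ht
    rw [Complex.Gamma_nat_eq_factorial, Complex.Gamma_nat_eq_factorial] at h
    have hst : ((a : ℂ) + 1) + ((b : ℂ) + 1) = ((a + b + 1 : ℕ) : ℂ) + 1 := by push_cast; ring
    rw [hst, Complex.Gamma_nat_eq_factorial] at h
    rw [eq_div_iff hne]
    linear_combination -h
  have hscaled := Complex.betaIntegral_scaled ((a : ℂ) + 1) ((b : ℂ) + 1) hu
  have h1 : ∀ x : ℝ, (x : ℂ) ^ ((a : ℂ) + 1 - 1) * ((u : ℂ) - x) ^ ((b : ℂ) + 1 - 1)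
      = ((x ^ a * (u - x) ^ b : ℝ) : ℂ) := by
    intro x
    rw [add_sub_cancel_right, add_sub_cancel_right, Complex.cpow_natCast, Complex.cpow_natCast]
    push_cast; ring
  rw [intervalIntegral.integral_congr (fun x _ => h1 x)] at hscaled
  rw [intervalIntegral.integral_ofReal] at hscaled
  have h2 : ((u : ℂ)) ^ ((a : ℂ) + 1 + ((b : ℂ) + 1) - 1) = ((u ^ (a + b + 1) : ℝ) : ℂ) := by
    have h3 : (a : ℂ) + 1 + ((b : ℂ) + 1) - 1 = ((a + b + 1 : ℕ) : ℂ) := by push_cast; ring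
    rw [h3, Complex.cpow_natCast]; push_cast; ring
  rw [h2, hbeta] at hscaled
  have h4 : ((∫ v in (0:ℝ)..u, v ^ a * (u - v) ^ b : ℝ) : ℂ)
      = ((u ^ (a + b + 1) * (a.factorial * b.factorial) / (a + b + 1).factorial : ℝ) : ℂ) := by
    rw [hscaled]; push_cast; ring
  exact_mod_cast h4

theorem double_integral_kernel (H : ℝ → ℝ → ℝ) (b : ℕ → ℝ)
    (hmom : ∀ k : ℕ, 1 ≤ k → ∀ L : ℝ, 0 ≤ L →
      ∫ x in Set.Ioi (0 : ℝ), x ^ (2 * k - 1) / (Nat.factorial (2 * k - 1)) * H x L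
        = ∑ n ∈ Finset.range (k + 1),
            b n * L ^ (2 * k - 2 * n) / (Nat.factorial (2 * k - 2 * n)))
    (i j : ℕ) (hi : 1 ≤ i) (hj : 1 ≤ j) (L : ℝ) (hL : 0 ≤ L)
    (hint : IntegrableOn
      (fun p : ℝ × ℝ =>
        p.1 ^ (2 * i - 1) * p.2 ^ (2 * j - 1)
          / (Nat.factorial (2 * i - 1) * Nat.factorial (2 * j - 1)) * H (p.1 + p.2) L)
      (Set.Ioi 0 ×ˢ Set.Ioi 0)) :
    (∫ x in Set.Ioi (0 : ℝ), ∫ y in Set.Ioi (0 : ℝ),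
        x ^ (2 * i - 1) * y ^ (2 * j - 1)
          / (Nat.factorial (2 * i - 1) * Nat.factorial (2 * j - 1)) * H (x + y) L)
      = ∑ n ∈ Finset.range (i + j + 1),
          b (i + j - n) * L ^ (2 * n) / (Nat.factorial (2 * n)) := by
  set k := i + j with hk
  have hk1 : 1 ≤ k := le_trans hi (Nat.le_add_right i j)
  set f : ℝ × ℝ → ℝ := fun p =>
    p.1 ^ (2 * i - 1) * p.2 ^ (2 * j - 1)
      / (Nat.factorial (2 * i - 1) * Nat.factorial (2 * j - 1)) * H (p.1 + p.2) L with hf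
  set T : ℝ × ℝ → ℝ × ℝ := fun p => (p.2, p.1 - p.2) with hTdef
  set g : ℝ × ℝ → ℝ := fun w =>
    w.2 ^ (2 * i - 1) * (w.1 - w.2) ^ (2 * j - 1)
      / (Nat.factorial (2 * i - 1) * Nat.factorial (2 * j - 1)) * H w.1 L with hg
  set S : Set (ℝ × ℝ) := {p : ℝ × ℝ | 0 < p.2 ∧ p.2 < p.1} with hSdef
  have hS : MeasurableSet S :=
    (measurableSet_lt measurable_const measurable_snd).inter
      (measurableSet_lt measurable_snd measurable_fst)
  have hT : MeasurePreserving T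
      ((volume : Measure ℝ).prod volume) ((volume : Measure ℝ).prod volume) := by
    have h1 := (measurePreserving_prod_neg_add (volume : Measure ℝ) volume).comp
      (Measure.measurePreserving_swap (μ := (volume : Measure ℝ)) (ν := volume))
    have h2 : ((fun z : ℝ × ℝ => (z.1, -z.1 + z.2)) ∘ Prod.swap) = T := by
      funext p; simp [hTdef, Prod.swap, neg_add_eq_sub]
    rwa [h2] at h1
  have hTemb : MeasurableEmbedding T := by
    have h2 : T = ⇑((MeasurableEquiv.prodComm : ℝ × ℝ ≃ᵐ ℝ × ℝ).trans (MeasurableEquiv.shearSubRight ℝ)) := by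
      funext p; rfl
    rw [h2]; exact ((MeasurableEquiv.prodComm : ℝ × ℝ ≃ᵐ ℝ × ℝ).trans
      (MeasurableEquiv.shearSubRight ℝ)).measurableEmbedding
  have hpre : T ⁻¹' (Set.Ioi 0 ×ˢ Set.Ioi 0) = S := by
    ext p
    simp only [hTdef, Set.mem_preimage, Set.mem_prod, Set.mem_Ioi, hSdef, Set.mem_setOf_eq,
      sub_pos]
  have hfT : f ∘ T = g := by
    funext w
    simp only [Function.comp, hf, hTdef, hg]
    have : w.2 + (w.1 - w.2) = w.1 := by ring
    rw [this]
  have hvol : (volume : Measure (ℝ × ℝ)) = (volume : Measure ℝ).prod volume :=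
    Measure.volume_eq_prod ℝ ℝ
  rw [hvol] at hint
  have hgS : IntegrableOn g S ((volume : Measure ℝ).prod volume) := by
    have := (hT.integrableOn_comp_preimage hTemb).mpr hint
    rwa [hpre, hfT] at this
  have hGind : Integrable (S.indicator g) ((volume : Measure ℝ).prod volume) :=
    (integrable_indicator_iff hS).mpr hgS
  -- inner integral computation
  have hinner : ∀ u : ℝ, (∫ v, S.indicator g (u, v))
      = (Set.Ioi (0:ℝ)).indicator
          (fun u => u ^ (2 * k - 1) / (Nat.factorial (2 * k - 1)) * H u L) u := by
    intro u
    have h1 : (fun v => S.indicator g (u, v))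
        = (Set.Ioo (0:ℝ) u).indicator (fun v =>
            v ^ (2 * i - 1) * (u - v) ^ (2 * j - 1)
              / (Nat.factorial (2 * i - 1) * Nat.factorial (2 * j - 1)) * H u L) := by
      funext v
      simp only [Set.indicator_apply, hSdef, Set.mem_setOf_eq, Set.mem_Ioo, hg]
    rw [h1, integral_indicator measurableSet_Ioo]
    rcases le_or_gt u 0 with hu | hu
    · rw [Set.Ioo_eq_empty (by intro h; exact absurd (h.trans_le hu) (lt_irrefl 0))]
      rw [Measure.restrict_empty, integral_zero_measure,
        Set.indicator_of_notMem (by simpa using hu)]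
    · rw [Set.indicator_of_mem (Set.mem_Ioi.mpr hu)]
      have h2 : (fun v : ℝ => v ^ (2 * i - 1) * (u - v) ^ (2 * j - 1)
            / (Nat.factorial (2 * i - 1) * Nat.factorial (2 * j - 1)) * H u L)
          = fun v : ℝ => (v ^ (2 * i - 1) * (u - v) ^ (2 * j - 1)) *
            (H u L / (Nat.factorial (2 * i - 1) * Nat.factorial (2 * j - 1))) := by
        funext v; ring
      rw [h2, integral_mul_const, ← integral_Ioc_eq_integral_Ioo,
        ← intervalIntegral.integral_of_le hu.le, beta_nat _ _ hu]
      have hAB : (2 * i - 1) + (2 * j - 1) + 1 = 2 * k - 1 := by omega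
      rw [hAB]
      have hA0 : ((2 * i - 1).factorial : ℝ) ≠ 0 :=
        Nat.cast_ne_zero.mpr (Nat.factorial_ne_zero _)
      have hB0 : ((2 * j - 1).factorial : ℝ) ≠ 0 :=
        Nat.cast_ne_zero.mpr (Nat.factorial_ne_zero _)
      have hK0 : ((2 * k - 1).factorial : ℝ) ≠ 0 :=
        Nat.cast_ne_zero.mpr (Nat.factorial_ne_zero _)
      field_simp
  have key : (∫ x in Set.Ioi (0 : ℝ), ∫ y in Set.Ioi (0 : ℝ), f (x, y))
      = ∫ u in Set.Ioi (0:ℝ), u ^ (2 * k - 1) / (Nat.factorial (2 * k - 1)) * H u L := by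
    rw [← setIntegral_prod f hint, ← hT.map_eq, hTemb.setIntegral_map, hpre]
    have : (fun w => f (T w)) = g := hfT
    calc ∫ w in S, f (T w) ∂((volume : Measure ℝ).prod volume)
        = ∫ w in S, g w ∂((volume : Measure ℝ).prod volume) := by rw [← hfT]; rfl
      _ = ∫ w, S.indicator g w ∂((volume : Measure ℝ).prod volume) :=
          (integral_indicator hS).symm
      _ = ∫ u, ∫ v, S.indicator g (u, v) := integral_prod _ hGind
      _ = ∫ u, (Set.Ioi (0:ℝ)).indicator
            (fun u => u ^ (2 * k - 1) / (Nat.factorial (2 * k - 1)) * H u L) u := by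
          exact integral_congr_ae (Filter.Eventually.of_forall hinner)
      _ = ∫ u in Set.Ioi (0:ℝ), u ^ (2 * k - 1) / (Nat.factorial (2 * k - 1)) * H u L :=
          integral_indicator measurableSet_Ioi
  rw [key, hmom k hk1 L hL, ← Finset.sum_range_reflect]
  apply Finset.sum_congr rfl
  intro n hn
  have hn' : n ≤ k := by simpa [Nat.lt_succ_iff] using hn
  have e1 : k + 1 - 1 - n = k - n := by omega
  have e2 : 2 * k - 2 * (k - n) = 2 * n := by omega
  rw [e1, e2]
end
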